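/- With the notation of the Kraus-reduction construction: for L ∈ B(H) with reduced Kraus operators {Ľ_{ℓ,e}} = X(L), it holds that Σ_{ℓ,e} Ľ_{ℓ,e}* Ľ_{ℓ,e} = J*(L* L), where J* is the Hilbert–Schmidt adjoint of the injection map J. -/

import Mathlib

/-! STATEMENT 5: For the reduced Kraus operators Ľ_{ℓ,e} of L, one has
Σ_{ℓ,e} Ľ_{ℓ,e}* Ľ_{ℓ,e} = J*(L* L). -/

open Matrix
open scoped Kronecker BigOperators

noncomputable section

abbrev Mat (n : ℕ) : Type := Matrix (Fin n) (Fin n) ℂ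

/-- Partial trace over the second tensor factor. -/
def ptrG {a b : ℕ} (M : Matrix (Fin a × Fin b) (Fin a × Fin b) ℂ) :
    Matrix (Fin a) (Fin a) ℂ :=
  Matrix.of fun i j => ∑ g : Fin b, M (i, g) (j, g)

variable {K n m : ℕ} {dF dG : Fin K → ℕ}

/-- The reduction map `R : B(H) → Ǎ`, `R(X) = ⊕ₖ tr_{G,k}(Vₖ* X Vₖ)`. -/
def Rmap (V : ∀ k : Fin K, Matrix (Fin n) (Fin (dF k) × Fin (dG k)) ℂ)
    (W : ∀ k : Fin K, Matrix (Fin m) (Fin (dF k)) ℂ) (X : Mat n) : Mat m :=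
  ∑ k : Fin K, W k * ptrG ((V k)ᴴ * X * V k) * (W k)ᴴ

/-- The injection map `J : Ǎ → B(H)`, `J(ρ̌) = ⊕ₖ ρ̌ₖ ⊗ 1_{G,k}/dim H_{G,k}`. -/
def Jmap (V : ∀ k : Fin K, Matrix (Fin n) (Fin (dF k) × Fin (dG k)) ℂ)
    (W : ∀ k : Fin K, Matrix (Fin m) (Fin (dF k)) ℂ) (ρ : Mat m) : Mat n :=
  ∑ k : Fin K, V k *
    (((W k)ᴴ * ρ * W k) ⊗ₖ (((dG k : ℂ))⁻¹ • (1 : Matrix (Fin (dG k)) (Fin (dG k)) ℂ))) *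
    (V k)ᴴ

/-- The Hilbert–Schmidt adjoint of `J`, `J*(X) = ⊕ₖ tr_{G,k}(Vₖ* X Vₖ)/dim H_{G,k}`. -/
def Jstar (V : ∀ k : Fin K, Matrix (Fin n) (Fin (dF k) × Fin (dG k)) ℂ)
    (W : ∀ k : Fin K, Matrix (Fin m) (Fin (dF k)) ℂ) (X : Mat n) : Mat m :=
  ∑ k : Fin K, ((dG k : ℂ))⁻¹ • (W k * ptrG ((V k)ᴴ * X * V k) * (W k)ᴴ)

/-- Membership in the reduced algebra `Ǎ = ⊕ₖ B(H_{F,k})`: block-diagonal matrices. -/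
def IsBlockDiag (W : ∀ k : Fin K, Matrix (Fin m) (Fin (dF k)) ℂ) (ρ : Mat m) : Prop :=
  ρ = ∑ k : Fin K, (W k * (W k)ᴴ) * ρ * (W k * (W k)ᴴ)

/-- The reduced Kraus operators `Ľ_{ℓ,e} = Σ_k W_{k-e} (L^{(k-e,k)}_{ℓ,F}/√dim(H_{G,k})) W_k*`. -/
def redKraus (dG : Fin K → ℕ) (W : ∀ k : Fin K, Matrix (Fin m) (Fin (dF k)) ℂ)
    {d : ℕ} (LF : ∀ j k : Fin K, Fin d → Matrix (Fin (dF j)) (Fin (dF k)) ℂ)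
    (ℓ : Fin d) (e : ℤ) : Mat m :=
  ∑ j : Fin K, ∑ k : Fin K,
    if ((k : ℤ) - (j : ℤ) = e) then
      ((Real.sqrt (dG k) : ℂ))⁻¹ • (W j * LF j k ℓ * (W k)ᴴ)
    else 0

/-! Both sides equal `∑_{j,k,ℓ} (dim H_{G,k})⁻¹ W_k (L^{(j,k)}_{ℓ,F})* L^{(j,k)}_{ℓ,F} W_k*`.
In `∑_{ℓ,e} Ľ_{ℓ,e}* Ľ_{ℓ,e}` the blocks `(j,k)` with different row index `j` have orthogonal
ranges, and `e = k - j` determines `k` from `j`, so all cross terms vanish. In `J*(L* L)` the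
isometries `V_k` cut `L` down to its blocks `L^{(j,q)} = Σ_ℓ L^{(j,q)}_{ℓ,F} ⊗ G^{(j,q)}_ℓ`, and
Hilbert–Schmidt orthonormality of the `G^{(j,q)}_ℓ` kills the cross terms under `tr_{G,q}`. -/

section OrthogonalSums

variable {R ι ε : Type*} [NonUnitalNonAssocSemiring R] [StarRing R]

theorem star_sum_mul_sum_of_orthogonal (s : Finset ι) (T : ι → R)
    (hT : ∀ i ∈ s, ∀ i' ∈ s, i ≠ i' → star (T i) * T i' = 0) :
    star (∑ i ∈ s, T i) * ∑ i ∈ s, T i = ∑ i ∈ s, star (T i) * T i := by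
  rw [star_sum, Finset.sum_mul_sum]
  exact Finset.sum_congr rfl fun i hi =>
    Finset.sum_eq_single_of_mem i hi fun i' hi' hne => hT i hi i' hi' hne.symm

theorem sum_star_mul_self_homogeneous [Fintype ι] [DecidableEq ε] (T : ι → R) (g : ι → ε)
    (S : Finset ε) (hS : ∀ i, g i ∈ S)
    (hT : ∀ i i', i ≠ i' → g i = g i' → star (T i) * T i' = 0) :
    ∑ e ∈ S, star (∑ i, if g i = e then T i else 0) * (∑ i, if g i = e then T i else 0) =
      ∑ i, star (T i) * T i := by
  simp_rw [← Finset.sum_filter]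
  rw [← Finset.sum_fiberwise_of_maps_to (fun i _ => hS i)]
  refine Finset.sum_congr rfl fun e _ =>
    star_sum_mul_sum_of_orthogonal _ _ fun i hi i' hi' hne => hT i i' hne ?_
  rw [(Finset.mem_filter.1 hi).2, (Finset.mem_filter.1 hi').2]

end OrthogonalSums

section Isometries

variable {R o p ι : Type*} [CommRing R] [StarRing R] [Fintype o] [Fintype ι]
  {κ : ι → Type*} [∀ i, Fintype (κ i)] [∀ i, DecidableEq (κ i)] {V : ∀ i, Matrix o (κ i) R}

theorem sum_blocks_mul_of_orthonormal (hV : ∀ i, (V i)ᴴ * V i = 1)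
    (hVdisj : ∀ i j, i ≠ j → (V i)ᴴ * V j = 0) (M : ∀ i j, Matrix (κ i) (κ j) R) (q : ι) :
    (∑ i, ∑ j, V i * M i j * (V j)ᴴ) * V q = ∑ i, V i * M i q := by
  simp only [Matrix.sum_mul]
  refine Finset.sum_congr rfl fun i _ => ?_
  rw [Finset.sum_eq_single q]
  · rw [Matrix.mul_assoc, hV, Matrix.mul_one]
  · intro j _ hj
    rw [Matrix.mul_assoc, hVdisj j q hj, Matrix.mul_zero]
  · exact fun h => absurd (Finset.mem_univ q) h

theorem conjTranspose_mul_sum_of_orthonormal [Fintype p] (hV : ∀ i, (V i)ᴴ * V i = 1)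
    (hVdisj : ∀ i j, i ≠ j → (V i)ᴴ * V j = 0) (X : ∀ i, Matrix (κ i) p R) (q : ι) :
    (V q)ᴴ * ∑ i, V i * X i = X q := by
  rw [Matrix.mul_sum, Finset.sum_eq_single q]
  · rw [← Matrix.mul_assoc, hV, Matrix.one_mul]
  · intro i _ hi
    rw [← Matrix.mul_assoc, hVdisj q i hi.symm, Matrix.zero_mul]
  · exact fun h => absurd (Finset.mem_univ q) h

theorem conjTranspose_sum_mul_sum_of_orthonormal [Fintype p] (hV : ∀ i, (V i)ᴴ * V i = 1)
    (hVdisj : ∀ i j, i ≠ j → (V i)ᴴ * V j = 0) (X : ∀ i, Matrix (κ i) p R) :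
    (∑ i, V i * X i)ᴴ * ∑ i, V i * X i = ∑ i, (X i)ᴴ * X i := by
  simp only [Matrix.conjTranspose_sum, Matrix.conjTranspose_mul, Matrix.sum_mul, Matrix.mul_assoc,
    conjTranspose_mul_sum_of_orthonormal hV hVdisj]

theorem conjTranspose_mul_mul_of_orthonormal_blocks (hV : ∀ i, (V i)ᴴ * V i = 1)
    (hVdisj : ∀ i j, i ≠ j → (V i)ᴴ * V j = 0) {L : Matrix o o R}
    {M : ∀ i j, Matrix (κ i) (κ j) R} (hL : L = ∑ i, ∑ j, V i * M i j * (V j)ᴴ) (q : ι) :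
    (V q)ᴴ * (Lᴴ * L) * V q = ∑ i, (M i q)ᴴ * M i q := by
  rw [← conjTranspose_sum_mul_sum_of_orthonormal hV hVdisj,
    ← sum_blocks_mul_of_orthonormal hV hVdisj, ← hL,
    Matrix.conjTranspose_mul, Matrix.mul_assoc, Matrix.mul_assoc, Matrix.mul_assoc]

end Isometries

section PartialTrace

theorem ptrG_sum {a b : ℕ} {ι : Type*} (s : Finset ι)
    (f : ι → Matrix (Fin a × Fin b) (Fin a × Fin b) ℂ) :
    ptrG (∑ i ∈ s, f i) = ∑ i ∈ s, ptrG (f i) := by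
  ext i j
  simp only [ptrG, Matrix.of_apply, Matrix.sum_apply]
  exact Finset.sum_comm

theorem ptrG_kronecker {a b : ℕ} (A : Matrix (Fin a) (Fin a) ℂ) (B : Matrix (Fin b) (Fin b) ℂ) :
    ptrG (A ⊗ₖ B) = B.trace • A := by
  ext i j
  simp only [ptrG, Matrix.trace, Matrix.diag, Matrix.smul_apply, Matrix.kroneckerMap_apply,
    Matrix.of_apply, smul_eq_mul, Finset.sum_mul]
  exact Finset.sum_congr rfl fun g _ => mul_comm _ _

theorem ptrG_conjTranspose_mul_self_sum_kronecker {a b c e : ℕ} {ι : Type*} [Fintype ι]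
    (A : ι → Matrix (Fin c) (Fin a) ℂ) (G : ι → Matrix (Fin e) (Fin b) ℂ)
    (hGorth : ∀ ℓ f, ℓ ≠ f → ((G ℓ)ᴴ * G f).trace = 0)
    (hGnorm : ∀ ℓ, G ℓ ≠ 0 → ((G ℓ)ᴴ * G ℓ).trace = 1)
    (hpad : ∀ ℓ, G ℓ = 0 → A ℓ = 0) :
    ptrG ((∑ ℓ, A ℓ ⊗ₖ G ℓ)ᴴ * ∑ ℓ, A ℓ ⊗ₖ G ℓ) = ∑ ℓ, (A ℓ)ᴴ * A ℓ := by
  simp only [Matrix.conjTranspose_sum, Matrix.conjTranspose_kronecker, Matrix.sum_mul,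
    Matrix.mul_sum, ← Matrix.mul_kronecker_mul, ptrG_sum, ptrG_kronecker]
  refine Finset.sum_congr rfl fun ℓ _ => ?_
  rw [Finset.sum_eq_single ℓ (fun f _ hf => by rw [hGorth f ℓ hf, zero_smul])
    (fun h => absurd (Finset.mem_univ ℓ) h)]
  by_cases hG : G ℓ = 0
  · simp [hpad ℓ hG]
  · rw [hGnorm ℓ hG, one_smul]

end PartialTrace

section ReducedKraus

variable {d : ℕ} (dG) (W : ∀ k : Fin K, Matrix (Fin m) (Fin (dF k)) ℂ)
  (LF : ∀ j k : Fin K, Fin d → Matrix (Fin (dF j)) (Fin (dF k)) ℂ) (ℓ : Fin d)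

def krausBlock (p : Fin K × Fin K) : Mat m :=
  ((Real.sqrt (dG p.2) : ℂ))⁻¹ • (W p.1 * LF p.1 p.2 ℓ * (W p.2)ᴴ)

theorem redKraus_eq_sum_krausBlock (e : ℤ) :
    redKraus dG W LF ℓ e =
      ∑ p : Fin K × Fin K, if (p.2 : ℤ) - p.1 = e then krausBlock dG W LF ℓ p else 0 := by
  rw [redKraus, Fintype.sum_prod_type]
  rfl

theorem krausBlock_conjTranspose_mul_of_ne (hWdisj : ∀ j k, j ≠ k → (W j)ᴴ * W k = 0)
    {p p' : Fin K × Fin K} (h : p.1 ≠ p'.1) :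
    (krausBlock dG W LF ℓ p)ᴴ * krausBlock dG W LF ℓ p' = 0 := by
  simp only [krausBlock, Matrix.conjTranspose_smul, Matrix.conjTranspose_mul,
    Matrix.conjTranspose_conjTranspose, Matrix.smul_mul, Matrix.mul_smul, Matrix.mul_assoc]
  rw [← Matrix.mul_assoc (W p.1)ᴴ, hWdisj _ _ h]
  simp

theorem krausBlock_conjTranspose_mul_self (hWortho : ∀ k, (W k)ᴴ * W k = 1) (p : Fin K × Fin K) :
    (krausBlock dG W LF ℓ p)ᴴ * krausBlock dG W LF ℓ p =
      ((dG p.2 : ℂ))⁻¹ • (W p.2 * ((LF p.1 p.2 ℓ)ᴴ * LF p.1 p.2 ℓ) * (W p.2)ᴴ) := by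
  simp only [krausBlock, Matrix.conjTranspose_smul, Matrix.conjTranspose_mul,
    Matrix.conjTranspose_conjTranspose, Matrix.smul_mul, Matrix.mul_smul, Matrix.mul_assoc]
  rw [← Matrix.mul_assoc (W p.1)ᴴ, hWortho, Matrix.one_mul, smul_smul, star_inv₀,
    Complex.star_def, Complex.conj_ofReal, ← mul_inv, ← Complex.ofReal_mul,
    Real.mul_self_sqrt (Nat.cast_nonneg _), Complex.ofReal_natCast]

theorem sum_redKraus_conjTranspose_mul_self (hWortho : ∀ k, (W k)ᴴ * W k = 1)
    (hWdisj : ∀ j k, j ≠ k → (W j)ᴴ * W k = 0) :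
    ∑ e ∈ Finset.Icc (-(K : ℤ) + 1) ((K : ℤ) - 1),
        (redKraus dG W LF ℓ e)ᴴ * redKraus dG W LF ℓ e =
      ∑ p : Fin K × Fin K,
        ((dG p.2 : ℂ))⁻¹ • (W p.2 * ((LF p.1 p.2 ℓ)ᴴ * LF p.1 p.2 ℓ) * (W p.2)ᴴ) := by
  simp_rw [redKraus_eq_sum_krausBlock, ← Matrix.star_eq_conjTranspose]
  refine (sum_star_mul_self_homogeneous _ (fun p : Fin K × Fin K => (p.2 : ℤ) - p.1) _ ?_ ?_
    ).trans (Finset.sum_congr rfl fun p _ => krausBlock_conjTranspose_mul_self dG W LF ℓ hWortho p)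
  · intro p
    have := p.1.isLt
    have := p.2.isLt
    simp only [Finset.mem_Icc]
    omega
  · intro p p' hne hdiff
    refine krausBlock_conjTranspose_mul_of_ne dG W LF ℓ hWdisj fun h1 => hne (Prod.ext h1 ?_)
    have := congrArg (fun i : Fin K => (i : ℤ)) h1
    exact Fin.ext (by omega)

end ReducedKraus

theorem reduced_Kraus_normalization_general
    (V : ∀ k : Fin K, Matrix (Fin n) (Fin (dF k) × Fin (dG k)) ℂ)
    (W : ∀ k : Fin K, Matrix (Fin m) (Fin (dF k)) ℂ)
    (hVortho : ∀ k, (V k)ᴴ * V k = 1)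
    (hVdisj : ∀ j k, j ≠ k → (V j)ᴴ * V k = 0)
    (hWortho : ∀ k, (W k)ᴴ * W k = 1)
    (hWdisj : ∀ j k, j ≠ k → (W j)ᴴ * W k = 0)
    {d : ℕ} (L : Mat n)
    (LF : ∀ j k : Fin K, Fin d → Matrix (Fin (dF j)) (Fin (dF k)) ℂ)
    (GG : ∀ j k : Fin K, Fin d → Matrix (Fin (dG j)) (Fin (dG k)) ℂ)
    (hL : L = ∑ j : Fin K, ∑ k : Fin K, ∑ ℓ : Fin d,
      V j * ((LF j k ℓ) ⊗ₖ (GG j k ℓ)) * (V k)ᴴ)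
    (hGorth : ∀ (j k : Fin K) (ℓ f : Fin d), ℓ ≠ f → ((GG j k ℓ)ᴴ * GG j k f).trace = 0)
    (hGnorm : ∀ (j k : Fin K) (ℓ : Fin d), GG j k ℓ ≠ 0 → ((GG j k ℓ)ᴴ * GG j k ℓ).trace = 1)
    (hpad : ∀ (j k : Fin K) (ℓ : Fin d), GG j k ℓ = 0 → LF j k ℓ = 0) :
    ∑ e ∈ Finset.Icc (-(K : ℤ) + 1) ((K : ℤ) - 1), ∑ ℓ : Fin d,
        (redKraus dG W LF ℓ e)ᴴ * redKraus dG W LF ℓ e =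
      Jstar V W (Lᴴ * L) := by
  have hL' : L = ∑ j, ∑ k, V j * (∑ ℓ, LF j k ℓ ⊗ₖ GG j k ℓ) * (V k)ᴴ := by
    simp only [hL, Matrix.mul_sum, Matrix.sum_mul]
  calc _ = ∑ ℓ : Fin d, ∑ e ∈ Finset.Icc (-(K : ℤ) + 1) ((K : ℤ) - 1),
          (redKraus dG W LF ℓ e)ᴴ * redKraus dG W LF ℓ e := Finset.sum_comm
    _ = ∑ ℓ : Fin d, ∑ p : Fin K × Fin K,
          ((dG p.2 : ℂ))⁻¹ • (W p.2 * ((LF p.1 p.2 ℓ)ᴴ * LF p.1 p.2 ℓ) * (W p.2)ᴴ) :=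
        Finset.sum_congr rfl fun ℓ _ =>
          sum_redKraus_conjTranspose_mul_self dG W LF ℓ hWortho hWdisj
    _ = ∑ k, ((dG k : ℂ))⁻¹ • (W k * (∑ j, ∑ ℓ, (LF j k ℓ)ᴴ * LF j k ℓ) * (W k)ᴴ) := by
        simp only [Matrix.mul_sum, Matrix.sum_mul, Finset.smul_sum]
        rw [Finset.sum_comm, Fintype.sum_prod_type_right]
    _ = Jstar V W (Lᴴ * L) := by
        refine Finset.sum_congr rfl fun k _ => ?_
        rw [conjTranspose_mul_mul_of_orthonormal_blocks hVortho hVdisj hL', ptrG_sum]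
        simp only [ptrG_conjTranspose_mul_self_sum_kronecker _ _ (hGorth _ k) (hGnorm _ k)
          (hpad _ k)]

theorem reduced_Kraus_normalization
    (V : ∀ k : Fin K, Matrix (Fin n) (Fin (dF k) × Fin (dG k)) ℂ)
    (W : ∀ k : Fin K, Matrix (Fin m) (Fin (dF k)) ℂ)
    (hVortho : ∀ k, (V k)ᴴ * V k = 1)
    (hVdisj : ∀ j k, j ≠ k → (V j)ᴴ * V k = 0)
    (hVcomplete : ∑ k : Fin K, V k * (V k)ᴴ = 1)
    (hWortho : ∀ k, (W k)ᴴ * W k = 1)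
    (hWdisj : ∀ j k, j ≠ k → (W j)ᴴ * W k = 0)
    (hWcomplete : ∑ k : Fin K, W k * (W k)ᴴ = 1)
    (hdG : ∀ k, 0 < dG k)
    {d : ℕ} (L : Mat n)
    (LF : ∀ j k : Fin K, Fin d → Matrix (Fin (dF j)) (Fin (dF k)) ℂ)
    (GG : ∀ j k : Fin K, Fin d → Matrix (Fin (dG j)) (Fin (dG k)) ℂ)
    (hL : L = ∑ j : Fin K, ∑ k : Fin K, ∑ ℓ : Fin d,
      V j * ((LF j k ℓ) ⊗ₖ (GG j k ℓ)) * (V k)ᴴ)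
    (hGorth : ∀ (j k : Fin K) (ℓ f : Fin d), ℓ ≠ f → ((GG j k ℓ)ᴴ * GG j k f).trace = 0)
    (hGnorm : ∀ (j k : Fin K) (ℓ : Fin d), GG j k ℓ ≠ 0 → ((GG j k ℓ)ᴴ * GG j k ℓ).trace = 1)
    (hpad : ∀ (j k : Fin K) (ℓ : Fin d), GG j k ℓ = 0 → LF j k ℓ = 0) :
    ∑ e ∈ Finset.Icc (-(K : ℤ) + 1) ((K : ℤ) - 1), ∑ ℓ : Fin d,
        (redKraus dG W LF ℓ e)ᴴ * redKraus dG W LF ℓ e =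
      Jstar V W (Lᴴ * L) :=
  reduced_Kraus_normalization_general V W hVortho hVdisj hWortho hWdisj L LF GG hL hGorth hGnorm
    hpad

end
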